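/- Let T, S ∈ Im ℍ be purely imaginary quaternions with ‖T‖ = 1, let r, l ∈ ℝ with (r, l) ≠ (0, 0), and set T' = (2/(r² + l²))·(T × (l·(T × S) − r·S)), where p × q = (1/2)·(p·q − q·p) for purely imaginary p, q. Then ‖S + l·T'‖ = ‖S‖. (In the continuum limit this says that the Darboux transform η = γ + l·T of a curve γ with γ' = S satisfies |η'| = |γ'|.) -/

import Mathlib

/-!
Write `c = r² + l²`. Using `T² = -1`, the Darboux step factors as a two-sided multiplication,
`c • (S + l • T') = (r - l T) S (r + l T)`, and both factors `r ± l T` have norm `√c`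
because `T` is an imaginary unit. Multiplicativity of the quaternion norm then gives
`c ‖S + l • T'‖ = c ‖S‖`.
-/

open Quaternion

/-- The cross product of purely imaginary quaternions: `p × q = (1/2)(pq − qp)`. -/
noncomputable def qcross (p q : ℍ[ℝ]) : ℍ[ℝ] :=
  (2 : ℝ)⁻¹ • (p * q - q * p)

namespace Quaternion

theorem mul_self_eq_neg_one_of_re_eq_zero_of_norm_eq_one {T : ℍ[ℝ]} (hT : T.re = 0) (hTnorm : ‖T‖ = 1) :
    T * T = -1 := by
  rw [← sq, sq_eq_neg_normSq.mpr hT, normSq_eq_norm_mul_self, hTnorm, mul_one, coe_one]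

theorem norm_coe_add_smul_of_re_eq_zero {T : ℍ[ℝ]} (hT : T.re = 0) (r l : ℝ) :
    ‖(r : ℍ[ℝ]) + l • T‖ = √(r ^ 2 + l ^ 2 * ‖T‖ ^ 2) := by
  rw [← Real.sqrt_sq (norm_nonneg _), sq, sq ‖T‖, ← normSq_eq_norm_mul_self,
    ← normSq_eq_norm_mul_self, normSq_def', normSq_def']
  simp only [re_add, imI_add, imJ_add, imK_add, re_smul, imI_smul, imJ_smul, imK_smul, re_coe,
    imI_coe, imJ_coe, imK_coe, hT, smul_eq_mul]
  ring_nf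

end Quaternion

theorem smul_add_smul_qcross_eq_mul_mul {T : ℍ[ℝ]} (hT : T * T = -1) (S : ℍ[ℝ]) (r l : ℝ) :
    (r ^ 2 + l ^ 2) • S + (2 * l) • qcross T (l • qcross T S - r • S)
      = ((r : ℍ[ℝ]) - l • T) * S * ((r : ℍ[ℝ]) + l • T) := by
  have hTTS : T * (T * S) = -S := by rw [← mul_assoc, hT, neg_one_mul]
  have hSTT : S * (T * T) = -S := by rw [hT, mul_neg_one]
  rw [← mul_one (r : ℍ[ℝ]), coe_mul_eq_smul]
  simp only [qcross, smul_sub, mul_sub, sub_mul, mul_add, smul_smul, mul_smul_comm,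
    smul_mul_assoc, one_mul, mul_one, mul_assoc, hTTS, hSTT]
  module

theorem darboux_continuum_limit_preserves_speed_general
    (T S : ℍ[ℝ]) (hT : T.re = 0) (hTnorm : ‖T‖ = 1)
    (r l : ℝ) (hrl : (r, l) ≠ (0, 0))
    (T' : ℍ[ℝ])
    (hT' : T' = (2 / (r ^ 2 + l ^ 2)) • qcross T (l • qcross T S - r • S)) :
    ‖S + l • T'‖ = ‖S‖ := by
  set c := r ^ 2 + l ^ 2
  have hc : 0 < c := by
    rcases eq_or_ne r 0 with rfl | hr
    · have hl : l ≠ 0 := by simpa using hrl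
      positivity
    · positivity
  have hfactor : c • (S + l • T') = ((r : ℍ[ℝ]) - l • T) * S * ((r : ℍ[ℝ]) + l • T) := by
    rw [← smul_add_smul_qcross_eq_mul_mul
      (mul_self_eq_neg_one_of_re_eq_zero_of_norm_eq_one hT hTnorm), hT', smul_add, smul_smul,
      smul_smul]
    congr 2
    field_simp
  have hfactors : ‖(r : ℍ[ℝ]) - l • T‖ * ‖(r : ℍ[ℝ]) + l • T‖ = c := by
    rw [sub_eq_add_neg, ← neg_smul, norm_coe_add_smul_of_re_eq_zero hT,
      norm_coe_add_smul_of_re_eq_zero hT]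
    simp only [hTnorm, one_pow, mul_one, neg_sq]
    exact Real.mul_self_sqrt hc.le
  refine mul_left_cancel₀ hc.ne' ?_
  calc c * ‖S + l • T'‖ = ‖c • (S + l • T')‖ := by rw [norm_smul, Real.norm_of_nonneg hc.le]
    _ = (‖(r : ℍ[ℝ]) - l • T‖ * ‖(r : ℍ[ℝ]) + l • T‖) * ‖S‖ := by
      rw [hfactor, norm_mul, norm_mul]; ring
    _ = c * ‖S‖ := by rw [hfactors]

theorem darboux_continuum_limit_preserves_speed
    (T S : ℍ[ℝ]) (hT : T.re = 0) (hS : S.re = 0) (hTnorm : ‖T‖ = 1)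
    (r l : ℝ) (hrl : (r, l) ≠ (0, 0))
    (T' : ℍ[ℝ])
    (hT' : T' = (2 / (r ^ 2 + l ^ 2)) • qcross T (l • qcross T S - r • S)) :
    ‖S + l • T'‖ = ‖S‖ :=
  darboux_continuum_limit_preserves_speed_general T S hT hTnorm r l hrl T' hT'
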